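/- With the setup of the Dirichlet-killed Brownian motion on (0,c), for all t > 0: ∫₀^c e^{-a}·e^{-c}·E_a[e^{X_t}; T_{(0,c)} > t] da = 2c·∑_{j=1}^∞ (-1)^{j+1}·(π²j²/(π²j² + c²)²)·exp(-π²j²t/(2c²))·(1 - (-1)^j·e^{-c})². -/

import Mathlib

/-!
Expanding the kernel in its sine series, both integrals commute with the sum, because the weights
`exp (-π² j² t / (2 c²))` are summable for `t > 0` and the sines are bounded by one. This gives
`∫ f · P_t g = (2 / c) ∑ⱼ exp (-π² j² t / (2 c²)) f̂ⱼ ĝⱼ` with the sine coefficients `f̂ⱼ`, `ĝⱼ`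
on `(0, c)`. For `e^{-a}` and `e^{y}` these are elementary integrals, and since `((-1)ʲ)² = 1` the
factor `e^{-c} (1 - (-1)ʲ e^{c})` equals `-(-1)ʲ (1 - (-1)ʲ e^{-c})`, which produces the square.
-/

open Real

/-- The transition density of Brownian motion on `(0,c)` killed at the boundary:
`E_a[e^{X_t}; T_{(0,c)} > t] = ∫_0^c p^c_t(a,y) e^y dy`. -/
noncomputable def dirichletHeatKernel (c t x y : ℝ) : ℝ :=
  (2 / c) * ∑' j : ℕ+, Real.exp (-π ^ 2 * j ^ 2 * t / (2 * c ^ 2)) *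
    Real.sin (π * j * x / c) * Real.sin (π * j * y / c)

open MeasureTheory

theorem Summable.mul_of_abs_le {ι : Type*} {f g : ι → ℝ} (hf : Summable f) {C : ℝ}
    (hg : ∀ j, |g j| ≤ C) : Summable fun j => f j * g j :=
  .of_norm_bounded (hf.abs.mul_right C) fun j => by
    rw [Real.norm_eq_abs, abs_mul]
    exact mul_le_mul_of_nonneg_left (hg j) (abs_nonneg _)

theorem intervalIntegral.integral_tsum_mul_eq_tsum_mul_integral {ι : Type*} [Countable ι]
    {b : ι → ℝ} (hb : Summable b) {φ : ι → ℝ → ℝ} (hφ : ∀ j, Continuous (φ j))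
    (hφ_le : ∀ j x, |φ j x| ≤ 1) {g : ℝ → ℝ} {a₀ a₁ : ℝ} (hg : IntervalIntegrable g volume a₀ a₁) :
    ∫ x in a₀..a₁, (∑' j, b j * φ j x) * g x = ∑' j, b j * ∫ x in a₀..a₁, φ j x * g x := by
  have hterm_le : ∀ j x, |b j * φ j x| ≤ |b j| := fun j x => by
    simpa [abs_mul] using mul_le_mul_of_nonneg_left (hφ_le j x) (abs_nonneg (b j))
  have hsum : HasSum (fun j => ∫ x in a₀..a₁, b j * φ j x * g x)
      (∫ x in a₀..a₁, (∑' j, b j * φ j x) * g x) := by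
    refine intervalIntegral.hasSum_integral_of_dominated_convergence (fun j x => |b j| * |g x|)
      (fun j => ((hg.continuousOn_mul ((hφ j).const_mul (b j)).continuousOn).def').1)
      (fun j => .of_forall fun x _ => ?_) (.of_forall fun x _ => hb.abs.mul_right _) ?_
      (.of_forall fun x _ => ?_)
    · rw [Real.norm_eq_abs, abs_mul]
      exact mul_le_mul_of_nonneg_right (hterm_le j x) (abs_nonneg _)
    · simp_rw [tsum_mul_right]
      exact hg.abs.const_mul _
    · exact (Summable.of_norm_bounded hb.abs (hterm_le · x)).hasSum.mul_right (g x)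
  rw [← hsum.tsum_eq]
  simp_rw [mul_assoc, intervalIntegral.integral_const_mul]

noncomputable def sineCoeff (c : ℝ) (g : ℝ → ℝ) (n : ℕ) : ℝ :=
  ∫ y in (0:ℝ)..c, sin (π * n * y / c) * g y

theorem abs_sineCoeff_le {c : ℝ} (hc : 0 ≤ c) {g : ℝ → ℝ} (hg : IntervalIntegrable g volume 0 c)
    (n : ℕ) : |sineCoeff c g n| ≤ ∫ y in (0:ℝ)..c, |g y| :=
  (intervalIntegral.abs_integral_le_integral_abs hc).trans <|
    intervalIntegral.integral_mono_on hc (hg.continuousOn_mul (by fun_prop)).abs hg.abs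
      fun y _ => by
        rw [abs_mul]
        exact mul_le_of_le_one_left (abs_nonneg _) (abs_sin_le_one _)

theorem hasDerivAt_exp_mul_sin_antideriv {s k : ℝ} (h : s ^ 2 + k ^ 2 ≠ 0) (y : ℝ) :
    HasDerivAt (fun y => exp (s * y) * (s * sin (k * y) - k * cos (k * y)) / (s ^ 2 + k ^ 2))
      (sin (k * y) * exp (s * y)) y := by
  have hlin : ∀ r : ℝ, HasDerivAt (fun y => r * y) r y := fun r => by
    simpa using (hasDerivAt_id y).const_mul r
  have := (((hlin s).exp).mul (((hlin k).sin.const_mul s).sub ((hlin k).cos.const_mul k))).div_const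
    (s ^ 2 + k ^ 2)
  refine this.congr_deriv ?_
  simp only [Pi.sub_apply]
  field_simp
  ring

theorem sineCoeff_exp_mul {c : ℝ} (hc : c ≠ 0) {s : ℝ} (hs : s ≠ 0) (n : ℕ) :
    sineCoeff c (fun y => exp (s * y)) n =
      π * n / c * (1 - (-1) ^ n * exp (s * c)) / (s ^ 2 + (π * n / c) ^ 2) := by
  set k := π * n / c
  have hk : ∀ y, π * n * y / c = k * y := fun y => by ring
  have hkc : k * c = n * π := by simp only [k]; field_simp
  simp_rw [sineCoeff, hk]
  rw [intervalIntegral.integral_eq_sub_of_hasDerivAt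
    (fun y _ => hasDerivAt_exp_mul_sin_antideriv (by positivity) y)
    (Continuous.intervalIntegrable (by fun_prop) _ _), hkc, sin_nat_mul_pi, cos_nat_mul_pi]
  simp only [mul_zero, exp_zero, sin_zero, cos_zero]
  ring

theorem summable_exp_neg_pi_sq_mul_sq {c t : ℝ} (hc : c ≠ 0) (ht : 0 < t) :
    Summable fun j : ℕ+ => exp (-π ^ 2 * j ^ 2 * t / (2 * c ^ 2)) := by
  have hneg : -π ^ 2 * t / (2 * c ^ 2) < 0 := by
    simp only [neg_mul, neg_div, neg_lt_zero]
    positivity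
  refine ((summable_exp_nat_mul_of_ge hneg (f := fun n : ℕ => (n : ℝ) ^ 2) fun n => by
    exact_mod_cast Nat.le_self_pow two_ne_zero n).comp_injective PNat.coe_injective).congr
    fun j => ?_
  simp only [Function.comp_apply]
  ring_nf

theorem integral_dirichletHeatKernel_mul {c t : ℝ} (hc : c ≠ 0) (ht : 0 < t) {g : ℝ → ℝ}
    (hg : IntervalIntegrable g volume 0 c) (x : ℝ) :
    ∫ y in (0:ℝ)..c, dirichletHeatKernel c t x y * g y =
      2 / c * ∑' j : ℕ+, exp (-π ^ 2 * j ^ 2 * t / (2 * c ^ 2)) * sineCoeff c g j *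
        sin (π * j * x / c) := by
  simp only [dirichletHeatKernel, mul_assoc (2 / c), intervalIntegral.integral_const_mul]
  rw [intervalIntegral.integral_tsum_mul_eq_tsum_mul_integral
    ((summable_exp_neg_pi_sq_mul_sq hc ht).mul_of_abs_le fun j => abs_sin_le_one _)
    (fun j => by fun_prop) (fun j y => abs_sin_le_one _) hg]
  simp only [mul_right_comm _ (sin _)]
  rfl

theorem integral_mul_integral_dirichletHeatKernel_mul {c t : ℝ} (hc : 0 < c) (ht : 0 < t)
    {f g : ℝ → ℝ} (hf : IntervalIntegrable f volume 0 c) (hg : IntervalIntegrable g volume 0 c) :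
    ∫ x in (0:ℝ)..c, f x * ∫ y in (0:ℝ)..c, dirichletHeatKernel c t x y * g y =
      2 / c * ∑' j : ℕ+, exp (-π ^ 2 * j ^ 2 * t / (2 * c ^ 2)) * sineCoeff c f j *
        sineCoeff c g j := by
  simp_rw [integral_dirichletHeatKernel_mul hc.ne' ht hg, mul_left_comm (f _) (2 / c),
    mul_comm (f _), intervalIntegral.integral_const_mul]
  rw [intervalIntegral.integral_tsum_mul_eq_tsum_mul_integral
    ((summable_exp_neg_pi_sq_mul_sq hc.ne' ht).mul_of_abs_le (abs_sineCoeff_le hc.le hg ·))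
    (fun j => by fun_prop) (fun j y => abs_sin_le_one _) hf]
  simp only [mul_right_comm _ (sineCoeff c g _)]
  rfl

theorem exp_neg_mul_one_sub_mul_exp {σ : ℝ} (hσ : σ ^ 2 = 1) (c : ℝ) :
    exp (-c) * (1 - σ * exp c) = -σ * (1 - σ * exp (-c)) := by
  have hexp : exp c * exp (-c) = 1 := by rw [← exp_add, add_neg_cancel, exp_zero]
  linear_combination (-exp (-c)) * hσ - σ * hexp

theorem two_div_mul_exp_neg_mul_sineCoeff_exp_neg_mul_sineCoeff_exp {c : ℝ} (hc : c ≠ 0) (n : ℕ) :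
    2 / c * (exp (-c) * (sineCoeff c (fun a => exp (-a)) n * sineCoeff c exp n)) =
      2 * c * ((-1) ^ (n + 1) * (π ^ 2 * n ^ 2 / (π ^ 2 * n ^ 2 + c ^ 2) ^ 2) *
        (1 - (-1) ^ n * exp (-c)) ^ 2) := by
  have hexp : sineCoeff c exp n = π * n / c * (1 - (-1) ^ n * exp c) / (1 + (π * n / c) ^ 2) := by
    simpa using sineCoeff_exp_mul hc one_ne_zero n
  have hexp_neg : sineCoeff c (fun a => exp (-a)) n =
      π * n / c * (1 - (-1) ^ n * exp (-c)) / (1 + (π * n / c) ^ 2) := by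
    simpa using sineCoeff_exp_mul hc (neg_ne_zero.2 one_ne_zero) n
  have hσ : ((-1 : ℝ) ^ n) ^ 2 = 1 := by rw [← pow_mul, pow_mul', neg_one_sq, one_pow]
  rw [hexp, hexp_neg]
  calc _ = 2 / c * (π * n / c) ^ 2 / (1 + (π * n / c) ^ 2) ^ 2 * (1 - (-1) ^ n * exp (-c)) *
        (exp (-c) * (1 - (-1) ^ n * exp c)) := by
        generalize 1 + (π * n / c) ^ 2 = d
        ring
    _ = _ := by
      rw [exp_neg_mul_one_sub_mul_exp hσ, pow_succ]
      field_simp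
      ring

theorem killed_bm_double_integral (c : ℝ) (hc : 0 < c) (t : ℝ) (ht : 0 < t) :
    ∫ a in (0:ℝ)..c, Real.exp (-a) * (Real.exp (-c) *
        ∫ y in (0:ℝ)..c, dirichletHeatKernel c t a y * Real.exp y) =
      2 * c * ∑' j : ℕ+, (-1 : ℝ) ^ ((j : ℕ) + 1) *
        (π ^ 2 * j ^ 2 / (π ^ 2 * j ^ 2 + c ^ 2) ^ 2) *
        Real.exp (-π ^ 2 * j ^ 2 * t / (2 * c ^ 2)) *
        (1 - (-1 : ℝ) ^ (j : ℕ) * Real.exp (-c)) ^ 2 := by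
  simp_rw [mul_left_comm (exp (-_)) (exp (-c)), intervalIntegral.integral_const_mul]
  rw [integral_mul_integral_dirichletHeatKernel_mul hc ht
    ((by fun_prop : Continuous fun a => exp (-a)).intervalIntegrable 0 c)
    (continuous_exp.intervalIntegrable 0 c), mul_left_comm, ← tsum_mul_left, ← tsum_mul_left, ← tsum_mul_left]
  refine tsum_congr fun j => ?_
  linear_combination exp (-π ^ 2 * j ^ 2 * t / (2 * c ^ 2)) *
    two_div_mul_exp_neg_mul_sineCoeff_exp_neg_mul_sineCoeff_exp hc.ne' j
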